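/- arXiv:2506.22133 — 2 statements merged into one kernel-verified Lean document; each statement's English description precedes it below -/
import Mathlib

section
/- Fix integers k ≥ t ≥ 1 and suppose s : ℤ/(k+1)ℤ → ℕ satisfies ∑_{x} s(x) = k. Then there exists x ∈ ℤ/(k+1)ℤ such that either (i) s(x-t) + s(x-t+1) + … + s(x) < t, or (ii) s(x-t) + s(x-t+1) + … + s(x) = t and s(x) > 0. -/
theorem stmt_10 (k t : ℕ) (ht : 1 ≤ t) (hk : t ≤ k)
    (s : ZMod (k + 1) → ℕ) (hs : ∑ x, s x = k) :
    ∃ x : ZMod (k + 1),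
      (∑ i ∈ Finset.range (t + 1), s (x - (i : ZMod (k + 1)))) < t ∨
      ((∑ i ∈ Finset.range (t + 1), s (x - (i : ZMod (k + 1)))) = t ∧ 0 < s x) := by
  by_contra hcon
  push_neg at hcon
  set term : ℕ → ZMod (k + 1) → ℕ :=
    fun j x => (t - j) + ∑ i ∈ Finset.range j, s (x - (i : ZMod (k + 1))) with htermdef
  have hne : (Finset.range (t + 1)).Nonempty := ⟨0, by simp⟩
  set Φ : ZMod (k + 1) → ℕ :=
    fun x => Finset.inf' (Finset.range (t + 1)) hne (fun j => term j x) with hPhidef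
  -- peel the first element of a window
  have hpeel : ∀ (x : ZMod (k + 1)) (j : ℕ),
      ∑ i ∈ Finset.range (j + 1), s (x + 1 - (i : ZMod (k + 1)))
        = (∑ i ∈ Finset.range j, s (x - (i : ZMod (k + 1)))) + s (x + 1) := by
    intro x j
    rw [Finset.sum_range_succ']
    congr 1
    · apply Finset.sum_congr rfl
      intro i _
      congr 1
      push_cast
      ring
    · congr 1
      push_cast
      ring
  -- key step inequality
  have key : ∀ x : ZMod (k + 1), Φ (x + 1) + 1 ≤ Φ x + s (x + 1) := by
    intro x
    obtain ⟨j₀, hj₀mem, hj₀⟩ :=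
      Finset.exists_mem_eq_inf' (s := Finset.range (t + 1)) hne (fun j => term j x)
    have hj₀' : Φ x = term j₀ x := hj₀
    rw [Finset.mem_range] at hj₀mem
    have hΦle : ∀ j, j < t + 1 → Φ (x + 1) ≤ term j (x + 1) := by
      intro j hj
      exact Finset.inf'_le _ (Finset.mem_range.mpr hj)
    rcases Nat.lt_or_ge j₀ t with hlt | hge
    · -- minimizer j₀ < t : pure algebra
      have h1 : Φ (x + 1) ≤ term (j₀ + 1) (x + 1) := hΦle _ (by omega)
      have h2 : term (j₀ + 1) (x + 1) + 1 = term j₀ x + s (x + 1) := by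
        simp only [htermdef]
        rw [hpeel x j₀]
        omega
      omega
    · -- j₀ = t
      have hj₀t : j₀ = t := by omega
      rw [hj₀t] at hj₀'
      have hTx : Φ x = ∑ i ∈ Finset.range t, s (x - (i : ZMod (k + 1))) := by
        rw [hj₀']
        simp [htermdef]
      obtain ⟨hW1, hW2⟩ := hcon (x + 1)
      rw [hpeel x t] at hW1 hW2
      by_cases hsx : s (x + 1) = 0
      · -- window gives T x ≥ t
        have h1 : Φ (x + 1) ≤ term 1 (x + 1) := hΦle 1 (by omega)
        have h2 : term 1 (x + 1) = (t - 1) + s (x + 1) := by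
          simp only [htermdef]
          rw [Finset.sum_range_one]
          simp
        omega
      · -- s (x+1) > 0 : window ≥ t + 1
        have h1 : Φ (x + 1) ≤ term 0 (x + 1) := hΦle 0 (by omega)
        have h2 : term 0 (x + 1) = t := by
          simp [htermdef]
        omega
  -- sum the key inequality over all x
  have hsum : ∑ x : ZMod (k + 1), (Φ (x + 1) + 1) ≤ ∑ x : ZMod (k + 1), (Φ x + s (x + 1)) :=
    Finset.sum_le_sum (fun x _ => key x)
  have e1 : ∑ x : ZMod (k + 1), Φ (x + 1) = ∑ x : ZMod (k + 1), Φ x :=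
    Fintype.sum_equiv (Equiv.addRight (1 : ZMod (k + 1))) _ _ (fun x => rfl)
  have e2 : ∑ x : ZMod (k + 1), s (x + 1) = ∑ x : ZMod (k + 1), s x :=
    Fintype.sum_equiv (Equiv.addRight (1 : ZMod (k + 1))) _ _ (fun x => rfl)
  have ecard : ∑ _x : ZMod (k + 1), (1 : ℕ) = k + 1 := by
    simp [Finset.card_univ, ZMod.card]
  rw [Finset.sum_add_distrib, Finset.sum_add_distrib, e1, e2, hs, ecard] at hsum
  omega
end

section
/- Fix integers k ≥ t ≥ 1 and s : ℤ/(k+1)ℤ → ℕ with ∑_x s(x) = k. Suppose for every x ∈ ℤ/(k+1)ℤ: if s(x) > 0 then ∑_{i=0}^{t} s(x-i) ≥ t+1, and if s(x) = 0 then ∑_{i=0}^{t} s(x-i) ≥ t. Then a contradiction follows; i.e., no such s exists. -/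
theorem stmt_11 (k t : ℕ) (ht : 1 ≤ t) (hk : t ≤ k)
    (s : ZMod (k + 1) → ℕ) (hs : ∑ x, s x = k)
    (hpos : ∀ x : ZMod (k + 1), 0 < s x →
      t + 1 ≤ ∑ i ∈ Finset.range (t + 1), s (x - (i : ZMod (k + 1))))
    (hzero : ∀ x : ZMod (k + 1), s x = 0 →
      t ≤ ∑ i ∈ Finset.range (t + 1), s (x - (i : ZMod (k + 1)))) :
    False := by
  classical
  -- B j x : beads in the window of length (t - j) ending at x
  set B : ℕ → ZMod (k + 1) → ℕ :=
    fun j x => ∑ i ∈ Finset.range (t - j), s (x - (i : ZMod (k + 1))) with hB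
  have hne : (Finset.range (t + 1)).Nonempty := ⟨0, by simp⟩
  -- potential function
  set C : ZMod (k + 1) → ℕ :=
    fun x => (Finset.range (t + 1)).inf' hne (fun j => j + B j x) with hC
  -- shifting identity: for j < t, B j x = s x + B (j+1) (x-1)
  have hBstep : ∀ j : ℕ, j < t → ∀ x : ZMod (k + 1),
      B j x = s x + B (j + 1) (x - 1) := by
    intro j hj x
    have h1 : t - j = (t - (j + 1)) + 1 := by omega
    rw [hB]
    simp only
    rw [h1, Finset.sum_range_succ']
    have h2 : ∀ i : ℕ, s (x - ((i + 1 : ℕ) : ZMod (k + 1)))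
        = s ((x - 1) - (i : ZMod (k + 1))) := by
      intro i
      congr 1
      push_cast
      ring
    rw [Finset.sum_congr rfl (fun i _ => h2 i)]
    simp [add_comm]
  -- full window identity
  have hB0 : ∀ x : ZMod (k + 1),
      (∑ i ∈ Finset.range (t + 1), s (x - (i : ZMod (k + 1))))
        = s x + B 0 (x - 1) := by
    intro x
    rw [Finset.sum_range_succ']
    have h2 : ∀ i : ℕ, s (x - ((i + 1 : ℕ) : ZMod (k + 1)))
        = s ((x - 1) - (i : ZMod (k + 1))) := by
      intro i
      congr 1
      push_cast
      ring
    rw [Finset.sum_congr rfl (fun i _ => h2 i)]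
    rw [hB]
    simp [add_comm]
  -- B t x = 0
  have hBt : ∀ x : ZMod (k + 1), B t x = 0 := by
    intro x; rw [hB]; simp
  -- B (t-1) x = s x
  have hBt1 : ∀ x : ZMod (k + 1), B (t - 1) x = s x := by
    intro x
    rw [hB]
    simp only
    have h1 : t - (t - 1) = 1 := by omega
    rw [h1]
    simp
  -- main inequality
  have hmain : ∀ x : ZMod (k + 1), C x + 1 ≤ C (x - 1) + s x := by
    intro x
    obtain ⟨j₀, hj₀mem, hj₀⟩ :=
      Finset.exists_mem_eq_inf' hne (fun j => j + B j (x - 1))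
    have hj₀le : j₀ ≤ t := by
      have := Finset.mem_range.mp hj₀mem
      omega
    by_cases hj : j₀ = 0
    · subst hj
      by_cases hsx : s x = 0
      · -- C x ≤ t - 1, C (x-1) ≥ t
        have hf := hzero x hsx
        rw [hB0 x, hsx, zero_add] at hf
        have h1 : C x ≤ (t - 1) + B (t - 1) x := by
          rw [hC]
          exact Finset.inf'_le _ (Finset.mem_range.mpr (by omega))
        rw [hBt1 x, hsx] at h1
        have h2 : B 0 (x - 1) ≤ C (x - 1) := by
          rw [hC]
          simp only at hj₀ ⊢
          omega
        omega
      · -- C x ≤ t, and t + 1 ≤ s x + B 0 (x - 1)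
        have hf := hpos x (Nat.pos_of_ne_zero hsx)
        rw [hB0 x] at hf
        have h1 : C x ≤ t + B t x := by
          rw [hC]
          exact Finset.inf'_le _ (Finset.mem_range.mpr (by omega))
        rw [hBt x] at h1
        have h2 : B 0 (x - 1) ≤ C (x - 1) := by
          rw [hC]
          simp only at hj₀ ⊢
          omega
        omega
    · -- j₀ ≥ 1 : pure shifting, no hypotheses needed
      have hj1 : 1 ≤ j₀ := Nat.one_le_iff_ne_zero.mpr hj
      have hstep := hBstep (j₀ - 1) (by omega) x
      have hj' : j₀ - 1 + 1 = j₀ := by omega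
      rw [hj'] at hstep
      have h1 : C x ≤ (j₀ - 1) + B (j₀ - 1) x := by
        rw [hC]
        exact Finset.inf'_le _ (Finset.mem_range.mpr (by omega))
      rw [hstep] at h1
      have h2 : C (x - 1) = j₀ + B j₀ (x - 1) := hj₀
      omega
  -- sum the main inequality over the cycle
  have hsum : ∑ x : ZMod (k + 1), (C x + 1) ≤ ∑ x : ZMod (k + 1), (C (x - 1) + s x) :=
    Finset.sum_le_sum (fun x _ => hmain x)
  have hshift : ∑ x : ZMod (k + 1), C (x - 1) = ∑ x : ZMod (k + 1), C x :=
    Equiv.sum_comp (Equiv.subRight (1 : ZMod (k + 1))) C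
  rw [Finset.sum_add_distrib, Finset.sum_add_distrib, hshift, hs] at hsum
  have hcard : ∑ _x : ZMod (k + 1), 1 = k + 1 := by
    simp [Finset.card_univ, ZMod.card]
  rw [hcard] at hsum
  omega
end
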